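/- (No-jump relation for the clamped-plate layer potential K₂, biharmonic part.) Let σ : ℝ → ℝ be infinitely differentiable with σ(s+L) = σ(s) for all s, and fix t ∈ ℝ. Define K(x, γ(s)) = (1/(4π))·[(r·τ(s))² − (r·n(s))²]/‖r‖² with r = x − γ(s) (this kernel equals −G^B_{n_y n_y} + G^B_{τ_y τ_y}). Then there is h₀ > 0 such that for 0 < |h| < h₀ the point γ(t) + h·n(t) does not lie on the curve, the function s ↦ K(γ(t), γ(s))·σ(s) is bounded on [0, L], and lim_{h→0, h≠0} ∫₀^L K(γ(t)+h·n(t), γ(s))σ(s) ds = ∫₀^L K(γ(t), γ(s))σ(s) ds (a two-sided limit with no jump). -/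

import Mathlib

open Real Filter Topology MeasureTheory

noncomputable section

/-- Euclidean dot product on `ℝ × ℝ`. -/
def dot2 (v w : ℝ × ℝ) : ℝ := v.1 * w.1 + v.2 * w.2

/-- Unit tangent vector `τ(s) = γ′(s)`. -/
def tang (γ : ℝ → ℝ × ℝ) (s : ℝ) : ℝ × ℝ := deriv γ s

/-- Unit normal vector `n(s) = (τ₂(s), −τ₁(s))`. -/
def nor (γ : ℝ → ℝ × ℝ) (s : ℝ) : ℝ × ℝ := ((deriv γ s).2, -(deriv γ s).1)

/-- Signed curvature `κ(s) = −γ″(s)·n(s)`. -/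
def curv (γ : ℝ → ℝ × ℝ) (s : ℝ) : ℝ := -(dot2 (deriv (deriv γ) s) (nor γ s))

/-- The kernel `K(x, γ(s)) = −G^B_{n_y n_y} + G^B_{τ_y τ_y}`, given by its explicit
formula, with `r = x − γ(s)`. -/
def K12clamped (γ : ℝ → ℝ × ℝ) (x : ℝ × ℝ) (s : ℝ) : ℝ :=
  1 / (4 * π) * ((dot2 (x - γ s) (tang γ s)) ^ 2 - (dot2 (x - γ s) (nor γ s)) ^ 2)
    / dot2 (x - γ s) (x - γ s)

/-! With `A`, `B` the tangential and normal components of `r = x - γ(s)`, the kernel is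
`(A² - B²) / (4π (A² + B²))`, so it is bounded by `1 / (4π)` uniformly in `x` and `s`. For fixed
`s` it is continuous in `x` away from `γ(s)`, and `γ(s) = γ(t)` only on the null set `t + Lℤ`,
so dominated convergence gives continuity of the integral at `γ(t)` along any approach, in
particular along the normal line: there is no jump. -/

lemma dot2_self_pos {v : ℝ × ℝ} (hv : v ≠ 0) : 0 < dot2 v v := by
  have : v.1 ≠ 0 ∨ v.2 ≠ 0 := by contrapose! hv; exact Prod.ext hv.1 hv.2
  unfold dot2
  rcases this with h | h
  · nlinarith [mul_self_pos.2 h, mul_self_nonneg v.2]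
  · nlinarith [mul_self_pos.2 h, mul_self_nonneg v.1]

lemma abs_sq_sub_sq_div_sq_add_sq_le_one (a b : ℝ) :
    |(a ^ 2 - b ^ 2) / (a ^ 2 + b ^ 2)| ≤ 1 := by
  rw [abs_div, abs_of_nonneg (by positivity : 0 ≤ a ^ 2 + b ^ 2)]
  refine div_le_one_of_le₀ (abs_le.2 ⟨?_, ?_⟩) (by positivity) <;>
    nlinarith [sq_nonneg a, sq_nonneg b]

section Kernel

variable {γ : ℝ → ℝ × ℝ} {s : ℝ}

lemma dot2_self_eq_tang_sq_add_nor_sq (hs : dot2 (deriv γ s) (deriv γ s) = 1) (v : ℝ × ℝ) :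
    dot2 v v = dot2 v (tang γ s) ^ 2 + dot2 v (nor γ s) ^ 2 := by
  simp only [dot2, tang, nor] at hs ⊢
  linear_combination (-(v.1 ^ 2 + v.2 ^ 2)) * hs

lemma abs_K12clamped_le (hs : dot2 (deriv γ s) (deriv γ s) = 1) (x : ℝ × ℝ) :
    |K12clamped γ x s| ≤ 1 / (4 * π) := by
  rw [K12clamped, mul_div_assoc, dot2_self_eq_tang_sq_add_nor_sq hs (x - γ s), abs_mul,
    abs_of_pos (by positivity : (0 : ℝ) < 1 / (4 * π))]
  exact mul_le_of_le_one_right (by positivity) (abs_sq_sub_sq_div_sq_add_sq_le_one _ _)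

lemma abs_K12clamped_mul_le (hs : dot2 (deriv γ s) (deriv γ s) = 1) (x : ℝ × ℝ) {σ : ℝ → ℝ}
    {C : ℝ} (hσ : |σ s| ≤ C) : |K12clamped γ x s * σ s| ≤ 1 / (4 * π) * C := by
  rw [abs_mul]
  exact mul_le_mul (abs_K12clamped_le hs x) hσ (abs_nonneg _) (by positivity)

lemma continuousAt_K12clamped {x : ℝ × ℝ} (hx : x ≠ γ s) :
    ContinuousAt (fun y => K12clamped γ y s) x := by
  refine ContinuousAt.div ?_ ?_ (dot2_self_pos (sub_ne_zero.2 hx)).ne' <;>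
    · unfold dot2; fun_prop

lemma measurable_K12clamped (hγ : Measurable γ) (x : ℝ × ℝ) :
    Measurable (K12clamped γ x) := by
  unfold K12clamped dot2 tang nor
  fun_prop

end Kernel

namespace Function.Periodic

variable {α β : Type*} [AddCommGroup α] [LinearOrder α] [IsOrderedAddMonoid α] [Archimedean α]
  {f : α → β} {c : α}

lemma exists_zsmul_eq_sub_of_injOn (hf : Periodic f c) (hc : 0 < c)
    (hinj : Set.InjOn f (Set.Ico 0 c)) {a b : α} (hab : f a = f b) : ∃ n : ℤ, b - a = n • c := by
  rw [← toIcoMod_eq_toIcoMod hc (a := 0)]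
  refine hinj (toIcoMod_mem_Ico' hc a) (toIcoMod_mem_Ico' hc b) ?_
  simpa only [toIcoMod, hf.sub_zsmul_eq] using hab

lemma countable_setOf_eq_of_injOn (hf : Periodic f c) (hc : 0 < c)
    (hinj : Set.InjOn f (Set.Ico 0 c)) (a : α) : {b | f b = f a}.Countable := by
  refine (Set.countable_range fun n : ℤ => a + n • c).mono fun b hb => ?_
  obtain ⟨n, hn⟩ := hf.exists_zsmul_eq_sub_of_injOn hc hinj hb.symm
  exact ⟨n, show a + n • c = b by rw [← hn, add_sub_cancel]⟩

end Function.Periodic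

section OffCurve

variable {γ : ℝ → ℝ × ℝ} {t : ℝ}

lemma dot2_smul_nor_tang (h : ℝ) : dot2 (h • nor γ t) (tang γ t) = 0 := by
  simp only [dot2, nor, tang, Prod.smul_fst, Prod.smul_snd, smul_eq_mul]
  ring

lemma dot2_smul_nor_smul_nor (ht : dot2 (deriv γ t) (deriv γ t) = 1) (h : ℝ) :
    dot2 (h • nor γ t) (h • nor γ t) = h ^ 2 := by
  simp only [dot2, nor, Prod.smul_fst, Prod.smul_snd, smul_eq_mul] at ht ⊢
  linear_combination h ^ 2 * ht

lemma eventually_dot2_sub_tang_ne_zero (hγ : DifferentiableAt ℝ γ t)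
    (ht : dot2 (deriv γ t) (deriv γ t) = 1) :
    ∀ᶠ s in 𝓝[≠] t, dot2 (γ s - γ t) (tang γ t) ≠ 0 := by
  have h₁ : HasDerivAt (fun s => (γ s).1) (deriv γ t).1 t := hγ.hasDerivAt.fst
  have h₂ : HasDerivAt (fun s => (γ s).2) (deriv γ t).2 t := hγ.hasDerivAt.snd
  have hg : HasDerivAt (fun s => dot2 (γ s - γ t) (tang γ t)) (dot2 (deriv γ t) (tang γ t)) t :=
    ((h₁.sub_const (γ t).1).mul_const _).add ((h₂.sub_const (γ t).2).mul_const _)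
  exact hg.eventually_ne (by rw [tang, ht]; exact one_ne_zero)

/-- Near `t` the normal line meets the curve only at `γ t`, because the tangential coordinate
`(γ s - γ t) · τ(t)` has derivative `1` at `t`; away from `t` the curve stays at a positive
distance from `γ t`. -/
theorem exists_pos_add_smul_nor_ne {L : ℝ} (hL : 0 < L) (hγ : Differentiable ℝ γ)
    (hper : Function.Periodic γ L) (hinj : Set.InjOn γ (Set.Ico 0 L))
    (ht : dot2 (deriv γ t) (deriv γ t) = 1) :
    ∃ h₀ > (0 : ℝ), ∀ h : ℝ, 0 < |h| → |h| < h₀ → ∀ s : ℝ, γ t + h • nor γ t ≠ γ s := by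
  obtain ⟨δ, hδ, hnear⟩ :
      ∃ δ > 0, ∀ s, |s - t| ≤ δ → s ≠ t → dot2 (γ s - γ t) (tang γ t) ≠ 0 := by
    obtain ⟨ε, hε, hball⟩ := Metric.eventually_nhds_iff.1
      (eventually_nhdsWithin_iff.1 (eventually_dot2_sub_tang_ne_zero (hγ t) ht))
    exact ⟨ε / 2, half_pos hε, fun s hs hst => hball (by rw [Real.dist_eq]; linarith) hst⟩
  obtain ⟨d, hd, hfar⟩ :
      ∃ d > 0, ∀ s ∈ Set.Icc (t + δ) (t + L - δ), d ≤ dot2 (γ s - γ t) (γ s - γ t) := by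
    have hγc := hγ.continuous
    refine isCompact_Icc.exists_forall_le' (by unfold dot2; fun_prop) fun s hs =>
      dot2_self_pos (sub_ne_zero.2 fun hst => ?_)
    obtain ⟨n, hn⟩ := hper.exists_zsmul_eq_sub_of_injOn hL hinj hst
    rw [zsmul_eq_mul] at hn
    have hn₁ : -1 < n := by exact_mod_cast (show (-1 : ℝ) < n by nlinarith [hs.2])
    have hn₂ : n < 0 := by exact_mod_cast (show (n : ℝ) < 0 by nlinarith [hs.1])
    omega
  refine ⟨√d, Real.sqrt_pos.2 hd, fun h hh₀ hh s hs => ?_⟩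
  set s' := toIcoMod hL (t - δ) s
  have hs' : γ s' - γ t = h • nor γ t := by
    rw [show γ s' = γ s from hper.sub_zsmul_eq _, ← hs, add_sub_cancel_left]
  obtain ⟨hs'₁, hs'₂⟩ := toIcoMod_mem_Ico hL (t - δ) s
  rcases le_or_gt s' (t + δ) with hle | hgt
  · have hs't : s' = t := by
      by_contra hne
      exact hnear s' (abs_le.2 ⟨by linarith, by linarith⟩) hne (hs' ▸ dot2_smul_nor_tang h)
    have h0 := dot2_smul_nor_smul_nor ht h
    rw [← hs', hs't, sub_self] at h0
    have : h = 0 := by simpa [dot2, eq_comm] using h0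
    simp [this] at hh₀
  · have hdh := hfar s' ⟨hgt.le, by linarith⟩
    rw [hs', dot2_smul_nor_smul_nor ht, ← sq_abs] at hdh
    have := (Real.lt_sqrt (abs_nonneg h)).1 hh
    linarith

end OffCurve

theorem tendsto_intervalIntegral_K12clamped_mul {ι : Type*} {l : Filter ι}
    [l.IsCountablyGenerated] {γ : ℝ → ℝ × ℝ} {σ : ℝ → ℝ} {x : ι → ℝ × ℝ} {x₀ : ℝ × ℝ}
    (hγ : Continuous γ)
    (harc : ∀ s, dot2 (deriv γ s) (deriv γ s) = 1) (hσ : Continuous σ)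
    (hx₀ : ∀ᵐ s, γ s ≠ x₀) (hx : Tendsto x l (𝓝 x₀)) (a b : ℝ) :
    Tendsto (fun i => ∫ s in a..b, K12clamped γ (x i) s * σ s) l
      (𝓝 (∫ s in a..b, K12clamped γ x₀ s * σ s)) := by
  obtain ⟨C, hC⟩ :=
    (isCompact_uIcc (a := a) (b := b)).exists_bound_of_continuousOn hσ.continuousOn
  refine intervalIntegral.tendsto_integral_filter_of_dominated_convergence
    (fun _ => 1 / (4 * π) * C) (Eventually.of_forall fun _ => ?_)
    (Eventually.of_forall fun _ => ?_) intervalIntegrable_const ?_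
  · exact ((measurable_K12clamped hγ.measurable _).mul hσ.measurable).aestronglyMeasurable
  · exact ae_of_all _ fun s hs =>
      abs_K12clamped_mul_le (harc s) _ (hC s (Set.uIoc_subset_uIcc hs))
  · filter_upwards [hx₀] with s hs _
    exact ((continuousAt_K12clamped hs.symm).tendsto.comp hx).mul tendsto_const_nhds

theorem stmt17_general (L : ℝ) (hL : 0 < L) (γ : ℝ → ℝ × ℝ)
    (hγ : ContDiff ℝ (⊤ : ℕ∞) γ)
    (hper : ∀ s, γ (s + L) = γ s)
    (hinj : Set.InjOn γ (Set.Ico 0 L))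
    (harc : ∀ s, dot2 (deriv γ s) (deriv γ s) = 1)
    (σ : ℝ → ℝ) (hσ : ContDiff ℝ (⊤ : ℕ∞) σ)
    (t : ℝ) :
    ∃ h₀ > (0 : ℝ),
      (∀ h : ℝ, 0 < |h| → |h| < h₀ → ∀ s : ℝ, γ t + h • nor γ t ≠ γ s) ∧
      (∃ M : ℝ, ∀ s ∈ Set.Icc (0 : ℝ) L, |K12clamped γ (γ t) s * σ s| ≤ M) ∧
      Tendsto
        (fun h : ℝ => ∫ s in (0 : ℝ)..L, K12clamped γ (γ t + h • nor γ t) s * σ s)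
        (𝓝[≠] (0 : ℝ))
        (𝓝 (∫ s in (0 : ℝ)..L, K12clamped γ (γ t) s * σ s)) := by
  obtain ⟨h₀, hh₀, hoff⟩ :=
    exists_pos_add_smul_nor_ne hL (hγ.differentiable (by simp)) hper hinj (harc t)
  obtain ⟨C, hC⟩ := (isCompact_Icc (a := 0) (b := L)).exists_bound_of_continuousOn
    hσ.continuous.continuousOn
  have hae : ∀ᵐ s, γ s ≠ γ t :=
    compl_mem_ae_iff.2
      ((Function.Periodic.countable_setOf_eq_of_injOn hper hL hinj t).measure_zero _)
  have hx : Tendsto (fun h : ℝ => γ t + h • nor γ t) (𝓝[≠] 0) (𝓝 (γ t)) :=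
    (Continuous.tendsto' (by fun_prop) 0 _ (by simp)).mono_left nhdsWithin_le_nhds
  exact ⟨h₀, hh₀, hoff, ⟨_, fun s hs => abs_K12clamped_mul_le (harc s) _ (hC s hs)⟩,
    tendsto_intervalIntegral_K12clamped_mul hγ.continuous harc hσ.continuous hae hx 0 L⟩

theorem stmt17 (L : ℝ) (hL : 0 < L) (γ : ℝ → ℝ × ℝ)
    (hγ : ContDiff ℝ (⊤ : ℕ∞) γ)
    (hper : ∀ s, γ (s + L) = γ s)
    (hinj : Set.InjOn γ (Set.Ico 0 L))
    (harc : ∀ s, dot2 (deriv γ s) (deriv γ s) = 1)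
    (σ : ℝ → ℝ) (hσ : ContDiff ℝ (⊤ : ℕ∞) σ) (hσper : ∀ s, σ (s + L) = σ s)
    (t : ℝ) :
    ∃ h₀ > (0 : ℝ),
      (∀ h : ℝ, 0 < |h| → |h| < h₀ → ∀ s : ℝ, γ t + h • nor γ t ≠ γ s) ∧
      (∃ M : ℝ, ∀ s ∈ Set.Icc (0 : ℝ) L, |K12clamped γ (γ t) s * σ s| ≤ M) ∧
      Tendsto
        (fun h : ℝ => ∫ s in (0 : ℝ)..L, K12clamped γ (γ t + h • nor γ t) s * σ s)
        (𝓝[≠] (0 : ℝ))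
        (𝓝 (∫ s in (0 : ℝ)..L, K12clamped γ (γ t) s * σ s)) :=
  stmt17_general L hL γ hγ hper hinj harc σ hσ t
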